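/- arXiv:1512.02623 — 3 statements merged into one kernel-verified Lean document; each statement's English description precedes it below -/
import Mathlib

section
/- Let X be a complex Banach space and T a bounded linear operator on X. Then T is right generalized Drazin invertible if and only if T admits a generalized Kato decomposition GKD(M,N) and X = K(T) + H₀(T). -/
open Filter Topology Set

namespace Paper

variable {Y : Type*} [NormedAddCommGroup Y] [NormedSpace ℂ Y]

/-- A bounded operator `A` is quasinilpotent if `‖Aⁿ‖^(1/n) → 0`. -/
def IsQuasinilpotent (A : Y →L[ℂ] Y) : Prop :=
  Tendsto (fun n : ℕ => ‖A ^ n‖ ^ (1 / (n : ℝ))) atTop (nhds (0 : ℝ))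

/-- `A` is semi-regular if its range is closed and `ker (Aⁿ) ⊆ ran A` for all `n`. -/
def SemiRegular (A : Y →L[ℂ] Y) : Prop :=
  IsClosed (Set.range A) ∧ ∀ n : ℕ, ∀ x : Y, (A ^ n) x = 0 → x ∈ Set.range A

/-- `A` has the single-valued extension property at `l0`. -/
def HasSVEPAt (A : Y →L[ℂ] Y) (l0 : ℂ) : Prop :=
  ∀ U : Set ℂ, IsOpen U → l0 ∈ U → ∀ f : ℂ → Y, AnalyticOnNhd ℂ f U →
    (∀ l ∈ U, l • f l - A (f l) = 0) → ∀ l ∈ U, f l = 0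

/-- `A` has the single-valued extension property (at every point). -/
def HasSVEP (A : Y →L[ℂ] Y) : Prop := ∀ l : ℂ, HasSVEPAt A l

/-- `A` is bounded below: injective with closed range. -/
def BoundedBelow (A : Y →L[ℂ] Y) : Prop :=
  Function.Injective A ∧ IsClosed (Set.range A)

variable {X : Type*} [NormedAddCommGroup X] [NormedSpace ℂ X] [CompleteSpace X]

/-- The quasinilpotent part `H₀(T)` of `T`. -/
def quasinilpotentPart (T : X →L[ℂ] X) : Set X :=
  {x : X | Tendsto (fun n : ℕ => ‖(T ^ n) x‖ ^ (1 / (n : ℝ))) atTop (nhds (0 : ℝ))}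

/-- The analytic core `K(T)` of `T`. -/
def analyticCore (T : X →L[ℂ] X) : Set X :=
  {x : X | ∃ (u : ℕ → X) (δ : ℝ), 0 < δ ∧ T (u 1) = x ∧
    (∀ n : ℕ, 1 ≤ n → T (u (n + 1)) = u n) ∧ (∀ n : ℕ, 1 ≤ n → ‖u n‖ ≤ δ ^ n * ‖x‖)}

/-- Restriction of `T` to an invariant subspace `M`, as a continuous linear operator on `M`. -/
def restrictCLM (T : X →L[ℂ] X) (M : Submodule ℂ X) (h : ∀ x ∈ M, T x ∈ M) : M →L[ℂ] M :=
  { toLinearMap := (T : X →ₗ[ℂ] X).restrict h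
    cont := (T.continuous.comp continuous_subtype_val).subtype_mk _ }

/-- `(M, N)` is a generalized Kato decomposition of `T`. -/
structure IsGKD (T : X →L[ℂ] X) (M N : Submodule ℂ X) : Prop where
  closedM : IsClosed (M : Set X)
  closedN : IsClosed (N : Set X)
  invM : ∀ x ∈ M, T x ∈ M
  invN : ∀ x ∈ N, T x ∈ N
  compl : IsCompl M N
  semiregM : SemiRegular (restrictCLM T M invM)
  quasiN : IsQuasinilpotent (restrictCLM T N invN)

/-- `T` admits a generalized Kato decomposition. -/
def HasGKD (T : X →L[ℂ] X) : Prop := ∃ M N : Submodule ℂ X, IsGKD T M N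

/-- `T` is left generalized Drazin invertible. -/
def LeftGDInvertible (T : X →L[ℂ] X) : Prop :=
  IsClosed (quasinilpotentPart T) ∧
  ∃ M : Submodule ℂ X, IsClosed (M : Set X) ∧ (∀ x ∈ M, T x ∈ M) ∧
    IsClosed (T '' (M : Set X)) ∧
    (M : Set X) ∩ quasinilpotentPart T = {0} ∧
    (∀ x : X, ∃ m ∈ M, ∃ h ∈ quasinilpotentPart T, x = m + h)

/-- `T` is right generalized Drazin invertible. -/
def RightGDInvertible (T : X →L[ℂ] X) : Prop :=
  IsClosed (analyticCore T) ∧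
  ∃ N : Submodule ℂ X, IsClosed (N : Set X) ∧ (∀ x ∈ N, T x ∈ N) ∧
    (N : Set X) ⊆ quasinilpotentPart T ∧
    analyticCore T ∩ (N : Set X) = {0} ∧
    (∀ x : X, ∃ k ∈ analyticCore T, ∃ h ∈ N, x = k + h)

/-- The approximate point spectrum. -/
def sigmaAp (T : X →L[ℂ] X) : Set ℂ :=
  {l : ℂ | ¬ BoundedBelow (l • ContinuousLinearMap.id ℂ X - T)}

/-- The surjective spectrum. -/
def sigmaSu (T : X →L[ℂ] X) : Set ℂ :=
  {l : ℂ | ¬ Function.Surjective (l • ContinuousLinearMap.id ℂ X - T)}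

/-- The left generalized Drazin spectrum. -/
def sigmaLgD (T : X →L[ℂ] X) : Set ℂ :=
  {l : ℂ | ¬ LeftGDInvertible (l • ContinuousLinearMap.id ℂ X - T)}

/-- The right generalized Drazin spectrum. -/
def sigmaRgD (T : X →L[ℂ] X) : Set ℂ :=
  {l : ℂ | ¬ RightGDInvertible (l • ContinuousLinearMap.id ℂ X - T)}

/-- The generalized Kato spectrum. -/
def sigmaGK (T : X →L[ℂ] X) : Set ℂ :=
  {l : ℂ | ¬ HasGKD (l • ContinuousLinearMap.id ℂ X - T)}

/-- The set of points where `T` fails to have the SVEP. -/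
def svepFailSet (T : X →L[ℂ] X) : Set ℂ := {l : ℂ | ¬ HasSVEPAt T l}

/-- The adjoint `T*` of `T`, acting on the dual space, `(T* φ) x = φ (T x)`. -/
noncomputable def adjointDual (T : X →L[ℂ] X) :
    StrongDual ℂ X →L[ℂ] StrongDual ℂ X :=
  (ContinuousLinearMap.compL ℂ X X ℂ).flip T

/-- The local resolvent set of `T` at `x`. -/
def localResolvent (T : X →L[ℂ] X) (x : X) : Set ℂ :=
  ⋃₀ {U : Set ℂ | IsOpen U ∧ ∃ f : ℂ → X, AnalyticOnNhd ℂ f U ∧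
      ∀ l ∈ U, l • f l - T (f l) = x}

/-- The local spectrum of `T` at `x`. -/
def localSpectrum (T : X →L[ℂ] X) (x : X) : Set ℂ := (localResolvent T x)ᶜ

/-- The local spectral subspace `X_T(Ω)`. -/
def localSpectralSubspace (T : X →L[ℂ] X) (Ω : Set ℂ) : Set X :=
  {x : X | localSpectrum T x ⊆ Ω}

/-- Dunford's property `(C)`. -/
def HasPropertyC (T : X →L[ℂ] X) : Prop :=
  ∀ Ω : Set ℂ, IsClosed Ω → IsClosed (localSpectralSubspace T Ω)

/-- Bishop's property `(β)`. -/
def HasPropertyBeta (T : X →L[ℂ] X) : Prop :=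
  ∀ U : Set ℂ, IsOpen U → ∀ f : ℕ → ℂ → X, (∀ n, AnalyticOnNhd ℂ (f n) U) →
    (∀ K : Set ℂ, K ⊆ U → IsCompact K →
      TendstoUniformlyOn (fun n l => l • f n l - T (f n l)) (fun _ => 0) atTop K) →
    ∀ K : Set ℂ, K ⊆ U → IsCompact K →
      TendstoUniformlyOn (fun n l => f n l) (fun _ => 0) atTop K

/-- `S` is a generalized Drazin inverse of `T`. -/
def IsGDInverse (T S : X →L[ℂ] X) : Prop :=
  S * T = T * S ∧ S * T * S = S ∧ IsQuasinilpotent (T * S * T - T)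

/-!
If `T` is right generalized Drazin invertible with `X = K(T) ⊕ N`, then `T` maps `K(T)` onto
itself, so `T|K(T)` is surjective, hence semi-regular, and `T|N` is quasinilpotent by the uniform
boundedness principle because `N ⊆ H₀(T)`.

Conversely, let `(M, N)` be a generalized Kato decomposition. The projection onto `N` along `M`
intertwines `T` with the quasinilpotent `T|N`, which forces `K(T) ⊆ M`. On the semi-regular part
`S = T|M` every range `ran Sⁿ` is closed and contains every `ker Sᵏ`; a vector `x` of `H₀(S)` lies
within `cⁿ ‖Sⁿ x‖ → 0` of `ker Sⁿ`, hence in `⋂ₙ ran Sⁿ`, where `S` has preimages of bounded norm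
staying in `⋂ₙ ran Sⁿ`, so `x ∈ K(S)`. Thus `H₀(T) ∩ M ⊆ K(T)`, and `X = K(T) + H₀(T)` gives
`K(T) = M`, with `N` the required complement.
-/

theorem tendsto_rpow_one_div_nhds_zero_iff {a : ℕ → ℝ} (ha : ∀ n, 0 ≤ a n) :
    Tendsto (fun n : ℕ => a n ^ (1 / (n : ℝ))) atTop (𝓝 0) ↔
      ∀ ε > 0, ∀ᶠ n in atTop, a n ≤ ε ^ n := by
  constructor
  · intro h ε hε
    filter_upwards [h.eventually (gt_mem_nhds hε), eventually_ne_atTop 0] with n hn hn0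
    calc a n = (a n ^ (1 / (n : ℝ))) ^ n := by
          rw [one_div, Real.rpow_inv_natCast_pow (ha n) hn0]
      _ ≤ ε ^ n := pow_le_pow_left₀ (Real.rpow_nonneg (ha n) _) hn.le n
  · intro h
    refine tendsto_order.2 ⟨fun b hb => Eventually.of_forall fun n => hb.trans_le
      (Real.rpow_nonneg (ha n) _), fun ε hε => ?_⟩
    filter_upwards [h (ε / 2) (by positivity), eventually_ne_atTop 0] with n hn hn0
    calc a n ^ (1 / (n : ℝ)) ≤ ((ε / 2) ^ n) ^ (1 / (n : ℝ)) :=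
          Real.rpow_le_rpow (ha n) hn (by positivity)
      _ = ε / 2 := by rw [one_div, Real.pow_rpow_inv_natCast (by positivity) hn0]
      _ < ε := half_lt_self hε

theorem tendsto_pow_mul_of_tendsto_rpow_one_div {a : ℕ → ℝ} (ha : ∀ n, 0 ≤ a n)
    (h : Tendsto (fun n : ℕ => a n ^ (1 / (n : ℝ))) atTop (𝓝 0)) {c : ℝ} (hc : 0 ≤ c) :
    Tendsto (fun n => c ^ n * a n) atTop (𝓝 0) := by
  have hc' : 0 < 2 * (c + 1) := by positivity
  refine squeeze_zero' (Eventually.of_forall fun n => mul_nonneg (pow_nonneg hc n) (ha n)) ?_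
    (tendsto_pow_atTop_nhds_zero_of_lt_one (by norm_num : (0 : ℝ) ≤ 1 / 2) (by norm_num))
  filter_upwards [(tendsto_rpow_one_div_nhds_zero_iff ha).1 h _ (inv_pos.2 hc')] with n hn
  calc c ^ n * a n ≤ c ^ n * (2 * (c + 1))⁻¹ ^ n := by gcongr
    _ = (c / (2 * (c + 1))) ^ n := by rw [← mul_pow, div_eq_mul_inv]
    _ ≤ (1 / 2) ^ n := pow_le_pow_left₀ (by positivity)
        (by rw [div_le_div_iff₀ hc' two_pos]; linarith) n

section ClosedRange

variable {𝕜 E F : Type*} [NontriviallyNormedField 𝕜] [NormedAddCommGroup E] [NormedSpace 𝕜 E]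
  [CompleteSpace E] [NormedAddCommGroup F] [NormedSpace 𝕜 F] [CompleteSpace F]

theorem exists_preimage_norm_le_of_isClosed_range {f : E →L[𝕜] F} (hf : IsClosed (range f)) :
    ∃ C > 0, ∀ y ∈ range f, ∃ x, f x = y ∧ ‖x‖ ≤ C * ‖y‖ := by
  have : CompleteSpace f.range := hf.completeSpace_coe
  obtain ⟨C, hC, hpre⟩ := f.rangeRestrict.exists_preimage_norm_le
    (LinearMap.surjective_rangeRestrict _)
  refine ⟨C, hC, ?_⟩
  rintro _ ⟨x, rfl⟩
  obtain ⟨x', hx', hnorm⟩ := hpre ⟨f x, x, rfl⟩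
  exact ⟨x', congrArg Subtype.val hx', hnorm⟩

/-- A closed subspace containing `ker f` is saturated for the open map `f : E → ran f`. -/
theorem isClosed_map_of_isClosed_range {f : E →L[𝕜] F} (hf : IsClosed (range f))
    {V : Submodule 𝕜 E} (hV : IsClosed (V : Set E)) (hker : LinearMap.ker (f : E →ₗ[𝕜] F) ≤ V) :
    IsClosed (V.map (f : E →ₗ[𝕜] F) : Set F) := by
  have : CompleteSpace f.range := hf.completeSpace_coe
  have hsat : f.rangeRestrict ⁻¹' (f.rangeRestrict '' V) = V := by
    refine subset_antisymm ?_ (subset_preimage_image _ _)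
    rintro x ⟨v, hv, hfx⟩
    have hxv : x - v ∈ LinearMap.ker (f : E →ₗ[𝕜] F) := by
      rw [LinearMap.mem_ker, map_sub, sub_eq_zero]
      exact (congrArg Subtype.val hfx).symm
    simpa using V.add_mem hv (hker hxv)
  have hclosed : IsClosed (f.rangeRestrict '' V) :=
    (f.rangeRestrict.isQuotientMap (LinearMap.surjective_rangeRestrict _)).isClosed_preimage.1
      (by rwa [hsat])
  have hrange : IsClosed (f.range : Set F) := hf
  rw [Submodule.map_coe]
  convert hrange.isClosedMap_subtype_val _ hclosed using 1
  rw [image_image]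
  rfl

end ClosedRange

section Operators

variable {E F : Type*} [NormedAddCommGroup E] [NormedSpace ℂ E] [NormedAddCommGroup F]
  [NormedSpace ℂ F]

section AnalyticCore

variable {T : E →L[ℂ] E}

theorem mem_analyticCore_of_norm_le {x : E} (u : ℕ → E) {C δ : ℝ} (hδ : 0 ≤ δ)
    (hu₁ : T (u 1) = x) (hu : ∀ n, 1 ≤ n → T (u (n + 1)) = u n)
    (hbound : ∀ n, 1 ≤ n → ‖u n‖ ≤ C * δ ^ n) : x ∈ analyticCore T := by
  rcases eq_or_ne x 0 with rfl | hx
  · exact ⟨0, 1, one_pos, map_zero T, fun _ _ => map_zero T, fun _ _ => by simp⟩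
  have hx' : 0 < ‖x‖ := norm_pos_iff.2 hx
  set K := max 1 (C / ‖x‖)
  refine ⟨u, max 1 δ * K, by positivity, hu₁, hu, fun n hn => ?_⟩
  have hK : C / ‖x‖ ≤ K ^ n := (le_max_right _ _).trans (le_self_pow₀ (le_max_left _ _) (by omega))
  have hδn : δ ^ n ≤ max 1 δ ^ n := pow_le_pow_left₀ hδ (le_max_right _ _) n
  calc ‖u n‖ ≤ C / ‖x‖ * δ ^ n * ‖x‖ := by
        rw [div_mul_eq_mul_div, div_mul_cancel₀ _ hx'.ne']
        exact hbound n hn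
    _ ≤ K ^ n * max 1 δ ^ n * ‖x‖ := by gcongr
    _ = (max 1 δ * K) ^ n * ‖x‖ := by rw [mul_pow, mul_comm (K ^ n)]

theorem add_mem_analyticCore {x y : E} (hx : x ∈ analyticCore T) (hy : y ∈ analyticCore T) :
    x + y ∈ analyticCore T := by
  obtain ⟨u, δ, hδ, hu₁, hu, hun⟩ := hx
  obtain ⟨v, ε, hε, hv₁, hv, hvn⟩ := hy
  refine mem_analyticCore_of_norm_le (u + v) (C := ‖x‖ + ‖y‖) (δ := max δ ε) (by positivity)
    (by simp [hu₁, hv₁]) (fun n hn => by simp [hu n hn, hv n hn]) fun n hn => ?_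
  calc ‖u n + v n‖ ≤ δ ^ n * ‖x‖ + ε ^ n * ‖y‖ := (norm_add_le _ _).trans
        (add_le_add (hun n hn) (hvn n hn))
    _ ≤ max δ ε ^ n * ‖x‖ + max δ ε ^ n * ‖y‖ := by gcongr <;> simp
    _ = (‖x‖ + ‖y‖) * max δ ε ^ n := by ring

theorem smul_mem_analyticCore (a : ℂ) {x : E} (hx : x ∈ analyticCore T) :
    a • x ∈ analyticCore T := by
  obtain ⟨u, δ, hδ, hu₁, hu, hun⟩ := hx
  refine mem_analyticCore_of_norm_le (a • u) (C := ‖a‖ * ‖x‖) hδ.le (by simp [hu₁])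
    (fun n hn => by simp [hu n hn]) fun n hn => ?_
  rw [Pi.smul_apply, norm_smul, mul_assoc]
  gcongr
  rw [mul_comm]
  exact hun n hn

variable (T) in
def analyticCoreSubmodule : Submodule ℂ E where
  carrier := analyticCore T
  add_mem' := add_mem_analyticCore
  zero_mem' := ⟨0, 1, one_pos, map_zero T, fun _ _ => map_zero T, fun _ _ => by simp⟩
  smul_mem' := smul_mem_analyticCore

theorem apply_mem_analyticCore {x : E} (hx : x ∈ analyticCore T) : T x ∈ analyticCore T := by
  obtain ⟨u, δ, hδ, hu₁, hu, hun⟩ := hx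
  refine mem_analyticCore_of_norm_le (fun n => T (u n)) (C := ‖T‖ * ‖x‖) hδ.le (by rw [hu₁])
    (fun n hn => by rw [hu n hn]) fun n hn => ?_
  calc ‖T (u n)‖ ≤ ‖T‖ * (δ ^ n * ‖x‖) := T.le_opNorm_of_le (hun n hn)
    _ = ‖T‖ * ‖x‖ * δ ^ n := by ring

theorem exists_apply_eq_of_mem_analyticCore {x : E} (hx : x ∈ analyticCore T) :
    ∃ y ∈ analyticCore T, T y = x := by
  obtain ⟨u, δ, hδ, hu₁, hu, hun⟩ := hx
  refine ⟨u 1, mem_analyticCore_of_norm_le (fun n => u (n + 1)) (C := δ * ‖x‖) hδ.le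
    (hu 1 le_rfl) (fun n hn => hu (n + 1) (by omega)) fun n hn => ?_, hu₁⟩
  calc ‖u (n + 1)‖ ≤ δ ^ (n + 1) * ‖x‖ := hun (n + 1) (by omega)
    _ = δ * ‖x‖ * δ ^ n := by ring

theorem subset_analyticCore_of_exists_preimage {P : Set E} {c : ℝ} (hc : 0 < c)
    (hP : ∀ z ∈ P, ∃ w ∈ P, T w = z ∧ ‖w‖ ≤ c * ‖z‖) : P ⊆ analyticCore T := by
  have hstep : ∀ z : P, ∃ w : P, T w = z ∧ ‖(w : E)‖ ≤ c * ‖(z : E)‖ := fun z => by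
    obtain ⟨w, hw, hTw, hwn⟩ := hP z z.2
    exact ⟨⟨w, hw⟩, hTw, hwn⟩
  choose g hgT hgn using hstep
  intro z hz
  set u : ℕ → P := fun n => g^[n] ⟨z, hz⟩
  have hu : ∀ n, u (n + 1) = g (u n) := fun n => Function.iterate_succ_apply' g n _
  have hbound : ∀ n, ‖(u n : E)‖ ≤ c ^ n * ‖z‖ := by
    intro n
    induction n with
    | zero => simp [u]
    | succ n ih =>
      calc ‖(u (n + 1) : E)‖ ≤ c * ‖(u n : E)‖ := hu n ▸ hgn (u n)
        _ ≤ c * (c ^ n * ‖z‖) := by gcongr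
        _ = c ^ (n + 1) * ‖z‖ := by ring
  exact ⟨fun n => u n, c, hc, by simp only [hu, hgT]; rfl, fun n _ => by simp only [hu, hgT],
    fun n _ => hbound n⟩

end AnalyticCore

namespace SemiRegular

variable {S : E →L[ℂ] E}

theorem mem_range_pow_of_pow_apply_eq_zero (hS : SemiRegular S) {n : ℕ} {y : E}
    (hy : (S ^ n) y = 0) (m : ℕ) : y ∈ range (S ^ m) := by
  induction m with
  | zero => exact ⟨y, rfl⟩
  | succ m ih =>
    obtain ⟨z, rfl⟩ := ih
    obtain ⟨w, rfl⟩ := hS.2 (n + m) z (by rwa [pow_add, mul_apply_eq_comp])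
    exact ⟨w, by rw [pow_succ, mul_apply_eq_comp]⟩

theorem mem_range_pow_of_apply_mem_range_pow_succ (hS : SemiRegular S) {n : ℕ} {p : E}
    (hp : S p ∈ range (S ^ (n + 1))) : p ∈ range (S ^ n) := by
  obtain ⟨v, hv⟩ := hp
  rw [pow_succ', mul_apply_eq_comp] at hv
  obtain ⟨q, hq⟩ := hS.mem_range_pow_of_pow_apply_eq_zero (n := 1) (y := p - (S ^ n) v)
    (by rw [pow_one, map_sub, hv, sub_self]) n
  exact ⟨v + q, by rw [map_add, hq, add_sub_cancel]⟩

theorem isClosed_range_pow [CompleteSpace E] (hS : SemiRegular S) (n : ℕ) :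
    IsClosed (range (S ^ n)) := by
  induction n with
  | zero => simp
  | succ n ih =>
    have hker : LinearMap.ker (S : E →ₗ[ℂ] E) ≤
        LinearMap.range ((S ^ n : E →L[ℂ] E) : E →ₗ[ℂ] E) :=
      fun y hy => hS.mem_range_pow_of_pow_apply_eq_zero (n := 1) (by simpa using hy) n
    have := isClosed_map_of_isClosed_range hS.1 ih hker
    rw [Submodule.map_coe, LinearMap.coe_range, ← range_comp] at this
    rw [pow_succ']
    exact this

theorem exists_preimage_pow_norm_le [CompleteSpace E] (hS : SemiRegular S) :
    ∃ c > 0, ∀ n : ℕ, ∀ y ∈ range (S ^ n), ∃ p, (S ^ n) p = y ∧ ‖p‖ ≤ c ^ n * ‖y‖ := by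
  obtain ⟨c, hc, hpre⟩ := exists_preimage_norm_le_of_isClosed_range hS.1
  refine ⟨c, hc, fun n => ?_⟩
  induction n with
  | zero => exact fun y _ => ⟨y, rfl, by simp⟩
  | succ n ih =>
    rintro _ ⟨v, rfl⟩
    obtain ⟨p₁, hp₁, hp₁n⟩ := hpre ((S ^ (n + 1)) v)
      ⟨(S ^ n) v, by rw [pow_succ']; rfl⟩
    obtain ⟨p, hp, hpn⟩ := ih p₁ (hS.mem_range_pow_of_apply_mem_range_pow_succ ⟨v, hp₁.symm⟩)
    refine ⟨p, by rw [← hp₁, ← hp, ← mul_apply_eq_comp, ← pow_succ'], ?_⟩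
    calc ‖p‖ ≤ c ^ n * (c * ‖(S ^ (n + 1)) v‖) := hpn.trans (by gcongr)
      _ = c ^ (n + 1) * ‖(S ^ (n + 1)) v‖ := by ring

/-- The distance from `z` to `ker Sⁿ` is at most `cⁿ ‖Sⁿ z‖`, and every `ker Sⁿ` lies in the
closed subspace `ran Sᵐ`. -/
theorem quasinilpotentPart_subset_range_pow [CompleteSpace E] (hS : SemiRegular S) (m : ℕ) :
    quasinilpotentPart S ⊆ range (S ^ m) := by
  intro z hz
  obtain ⟨c, hc, hpre⟩ := hS.exists_preimage_pow_norm_le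
  choose p hp hpn using fun n => hpre n ((S ^ n) z) ⟨z, rfl⟩
  have hp₀ : Tendsto p atTop (𝓝 0) :=
    tendsto_zero_iff_norm_tendsto_zero.2 <| squeeze_zero (fun n => norm_nonneg _) hpn <|
      tendsto_pow_mul_of_tendsto_rpow_one_div (fun n => norm_nonneg _) hz hc.le
  have hlim : Tendsto (fun n => z - p n) atTop (𝓝 z) := by
    simpa using tendsto_const_nhds.sub hp₀
  refine (hS.isClosed_range_pow m).mem_of_tendsto hlim (Eventually.of_forall fun n => ?_)
  exact hS.mem_range_pow_of_pow_apply_eq_zero (n := n) (by rw [map_sub, hp, sub_self]) m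

theorem quasinilpotentPart_subset_analyticCore [CompleteSpace E] (hS : SemiRegular S) :
    quasinilpotentPart S ⊆ analyticCore S := by
  obtain ⟨c, hc, hpre⟩ := exists_preimage_norm_le_of_isClosed_range hS.1
  have hstep : ∀ z ∈ ⋂ m : ℕ, range (S ^ m),
      ∃ w ∈ ⋂ m : ℕ, range (S ^ m), S w = z ∧ ‖w‖ ≤ c * ‖z‖ := by
    intro z hz
    obtain ⟨w, hw, hwn⟩ := hpre z (by simpa using mem_iInter.1 hz 1)
    refine ⟨w, mem_iInter.2 fun m => hS.mem_range_pow_of_apply_mem_range_pow_succ ?_, hw, hwn⟩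
    exact hw ▸ mem_iInter.1 hz (m + 1)
  exact fun z hz => subset_analyticCore_of_exists_preimage hc hstep
    (mem_iInter.2 fun m => hS.quasinilpotentPart_subset_range_pow m hz)

end SemiRegular

theorem isQuasinilpotent_iff_quasinilpotentPart_eq_univ [CompleteSpace E] {A : E →L[ℂ] E} :
    IsQuasinilpotent A ↔ quasinilpotentPart A = univ := by
  have hpow : ∀ K : ℝ, ∀ᶠ n : ℕ in atTop, K ≤ 2 ^ n :=
    fun K => (tendsto_pow_atTop_atTop_of_one_lt one_lt_two).eventually_ge_atTop K
  rw [IsQuasinilpotent, tendsto_rpow_one_div_nhds_zero_iff fun n => norm_nonneg _,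
    eq_univ_iff_forall]
  constructor
  · intro hA x
    refine (tendsto_rpow_one_div_nhds_zero_iff fun n => norm_nonneg _).2 fun ε hε => ?_
    filter_upwards [hA (ε / 2) (half_pos hε), hpow ‖x‖] with n hAn hxn
    calc ‖(A ^ n) x‖ ≤ (ε / 2) ^ n * 2 ^ n := (A ^ n).le_of_opNorm_le_of_le hAn hxn
      _ = ε ^ n := by rw [← mul_pow, div_mul_cancel₀ _ two_ne_zero]
  · intro hA ε hε
    obtain ⟨C, hC⟩ := banach_steinhaus (g := fun n : ℕ => ((2 / ε) ^ n : ℝ) • A ^ n) fun x => by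
      have hx : Tendsto (fun n : ℕ => ((2 / ε) ^ n : ℝ) • (A ^ n) x) atTop (𝓝 0) := by
        refine tendsto_zero_iff_norm_tendsto_zero.2 ?_
        simpa [norm_smul, abs_of_pos hε] using tendsto_pow_mul_of_tendsto_rpow_one_div
          (fun n => norm_nonneg _) (hA x) (c := 2 / ε) (by positivity)
      obtain ⟨C, hC⟩ := (Metric.isBounded_range_of_tendsto _ hx).exists_norm_le
      exact ⟨C, fun n => hC _ ⟨n, rfl⟩⟩
    filter_upwards [hpow C] with n hCn
    have hn : (2 / ε) ^ n * ‖A ^ n‖ ≤ 2 ^ n := by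
      simpa [norm_smul, abs_of_pos hε] using (hC n).trans hCn
    calc ‖A ^ n‖ = (ε / 2) ^ n * ((2 / ε) ^ n * ‖A ^ n‖) := by
          rw [← mul_assoc, ← mul_pow, div_mul_div_cancel₀ two_ne_zero, div_self hε.ne',
            one_pow, one_mul]
      _ ≤ (ε / 2) ^ n * 2 ^ n := by gcongr
      _ = ε ^ n := by rw [← mul_pow, div_mul_cancel₀ _ two_ne_zero]

/-- `P x = Aⁿ (P uₙ)` with `‖uₙ‖ ≤ δⁿ ‖x‖`, and `δⁿ ‖Aⁿ‖ → 0`. -/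
theorem map_eq_zero_of_mem_analyticCore {T : E →L[ℂ] E} {A : F →L[ℂ] F} (hA : IsQuasinilpotent A)
    (P : E →L[ℂ] F) (hPT : ∀ z, P (T z) = A (P z)) {x : E} (hx : x ∈ analyticCore T) :
    P x = 0 := by
  obtain ⟨u, δ, hδ, hu₁, hu, hun⟩ := hx
  have hPTn : ∀ n z, P ((T ^ n) z) = (A ^ n) (P z) := by
    intro n
    induction n with
    | zero => simp
    | succ n ih => simp only [pow_succ', mul_apply_eq_comp, hPT, ih, implies_true]
  have horbit : ∀ n, 1 ≤ n → (T ^ n) (u n) = x := by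
    intro n hn
    induction n, hn using Nat.le_induction with
    | base => rw [pow_one, hu₁]
    | succ n hn ih => rw [pow_succ, mul_apply_eq_comp, hu n hn, ih]
  have hle : ∀ n, 1 ≤ n → ‖P x‖ ≤ δ ^ n * ‖A ^ n‖ * (‖P‖ * ‖x‖) := by
    intro n hn
    calc ‖P x‖ = ‖(A ^ n) (P (u n))‖ := by rw [← hPTn, horbit n hn]
      _ ≤ ‖A ^ n‖ * (‖P‖ * (δ ^ n * ‖x‖)) :=
          (A ^ n).le_opNorm_of_le (P.le_opNorm_of_le (hun n hn))
      _ = δ ^ n * ‖A ^ n‖ * (‖P‖ * ‖x‖) := by ring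
  have hlim : Tendsto (fun n => δ ^ n * ‖A ^ n‖ * (‖P‖ * ‖x‖)) atTop (𝓝 0) := by
    simpa using (tendsto_pow_mul_of_tendsto_rpow_one_div (fun n => norm_nonneg _) hA
      hδ.le).mul_const (‖P‖ * ‖x‖)
  exact norm_le_zero_iff.1 (ge_of_tendsto hlim (eventually_atTop.2 ⟨1, hle⟩))

theorem semiRegular_of_surjective {A : E →L[ℂ] E} (hA : Function.Surjective A) :
    SemiRegular A :=
  ⟨hA.range_eq ▸ isClosed_univ, fun _ x _ => hA x⟩

theorem isCompl_iff_inter_eq_zero_and_exists_add {p q : Submodule ℂ E} :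
    IsCompl p q ↔ (p : Set E) ∩ q = {0} ∧ ∀ x, ∃ y ∈ p, ∃ z ∈ q, x = y + z := by
  rw [isCompl_iff, disjoint_iff, Submodule.codisjoint_iff_exists_add_eq, ← SetLike.coe_set_eq,
    Submodule.coe_inf, Submodule.bot_coe]
  refine and_congr Iff.rfl (forall_congr' fun x => ?_)
  simp only [exists_and_left, eq_comm]

section Restriction

variable {T : E →L[ℂ] E} {M : Submodule ℂ E} {hM : ∀ x ∈ M, T x ∈ M}

theorem coe_restrictCLM_pow_apply (n : ℕ) (x : M) :
    ((restrictCLM T M hM ^ n) x : E) = (T ^ n) x := by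
  induction n with
  | zero => rfl
  | succ n ih => rw [pow_succ', mul_apply_eq_comp, pow_succ', mul_apply_eq_comp, ← ih]; rfl

theorem mem_quasinilpotentPart_restrictCLM_iff {x : M} :
    x ∈ quasinilpotentPart (restrictCLM T M hM) ↔ (x : E) ∈ quasinilpotentPart T := by
  simp only [quasinilpotentPart, Set.mem_ofPred_eq, Submodule.coe_norm, coe_restrictCLM_pow_apply]

theorem isQuasinilpotent_restrictCLM_iff [CompleteSpace M] :
    IsQuasinilpotent (restrictCLM T M hM) ↔ (M : Set E) ⊆ quasinilpotentPart T := by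
  rw [isQuasinilpotent_iff_quasinilpotentPart_eq_univ, eq_univ_iff_forall]
  exact ⟨fun h x hx => (mem_quasinilpotentPart_restrictCLM_iff (x := ⟨x, hx⟩)).1 (h _),
    fun h x => mem_quasinilpotentPart_restrictCLM_iff.2 (h x.2)⟩

theorem coe_mem_analyticCore_of_mem_restrictCLM {x : M}
    (hx : x ∈ analyticCore (restrictCLM T M hM)) : (x : E) ∈ analyticCore T := by
  obtain ⟨u, δ, hδ, hu₁, hu, hun⟩ := hx
  exact ⟨fun n => u n, δ, hδ, congrArg Subtype.val hu₁,
    fun n hn => congrArg Subtype.val (hu n hn), hun⟩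

end Restriction

namespace IsGKD

variable [CompleteSpace E] {T : E →L[ℂ] E} {M N : Submodule ℂ E}

/-- The projection onto `N` along `M` commutes with `T` and `T|_N` is quasinilpotent, so it
kills the analytic core. -/
theorem analyticCore_subset (h : IsGKD T M N) : analyticCore T ⊆ M := by
  have hMN : Submodule.IsTopCompl N M :=
    Submodule.IsCompl.isTopCompl_of_isClosed h.compl.symm h.closedN h.closedM
  have hcomm : Commute (N.projectionL M hMN) T := by
    refine (ContinuousLinearMap.IsIdempotentElem.commute_iff
      (Submodule.isIdempotentElem_projectionL hMN)).2 ?_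
    rw [Submodule.range_projectionL, Submodule.ker_projectionL]
    exact ⟨h.invN, h.invM⟩
  intro x hx
  refine (Submodule.projectionOntoL_apply_eq_zero_iff hMN).1 <|
    map_eq_zero_of_mem_analyticCore h.quasiN _ (fun z => Subtype.ext ?_) hx
  exact DFunLike.congr_fun hcomm.eq z

theorem mem_analyticCore_of_mem_quasinilpotentPart (h : IsGKD T M N) {x : E} (hxM : x ∈ M)
    (hx : x ∈ quasinilpotentPart T) : x ∈ analyticCore T := by
  have : CompleteSpace M := h.closedM.completeSpace_coe
  exact coe_mem_analyticCore_of_mem_restrictCLM <| h.semiregM.quasinilpotentPart_subset_analyticCore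
    (mem_quasinilpotentPart_restrictCLM_iff (x := ⟨x, hxM⟩) |>.2 hx)

theorem analyticCore_eq (h : IsGKD T M N)
    (hdec : ∀ x, ∃ k ∈ analyticCore T, ∃ y ∈ quasinilpotentPart T, x = k + y) :
    analyticCore T = M := by
  refine h.analyticCore_subset.antisymm fun x hxM => ?_
  obtain ⟨k, hk, y, hy, rfl⟩ := hdec x
  have hyM : y ∈ M := by simpa using M.sub_mem hxM (h.analyticCore_subset hk)
  exact add_mem_analyticCore hk (h.mem_analyticCore_of_mem_quasinilpotentPart hyM hy)

end IsGKD

theorem isGKD_analyticCoreSubmodule [CompleteSpace E] {T : E →L[ℂ] E} {N : Submodule ℂ E}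
    (hK : IsClosed (analyticCore T)) (hN : IsClosed (N : Set E)) (hTN : ∀ x ∈ N, T x ∈ N)
    (hNH : (N : Set E) ⊆ quasinilpotentPart T) (hcompl : IsCompl (analyticCoreSubmodule T) N) :
    IsGKD T (analyticCoreSubmodule T) N := by
  have : CompleteSpace N := hN.completeSpace_coe
  refine ⟨hK, hN, fun x => apply_mem_analyticCore, hTN, hcompl, semiRegular_of_surjective ?_,
    isQuasinilpotent_restrictCLM_iff.2 hNH⟩
  rintro ⟨x, hx⟩
  obtain ⟨y, hy, rfl⟩ := exists_apply_eq_of_mem_analyticCore hx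
  exact ⟨⟨y, hy⟩, rfl⟩

end Operators

/-- `T` is right generalized Drazin invertible iff `T` admits a GKD
and `X = K(T) + H₀(T)`. -/
theorem right_gd_iff_gkd_core_add_h0 (T : X →L[ℂ] X) :
    RightGDInvertible T ↔
      HasGKD T ∧
        ∀ x : X, ∃ k ∈ analyticCore T, ∃ h ∈ quasinilpotentPart T, x = k + h := by
  constructor
  · rintro ⟨hK, N, hN, hTN, hNH, hKN, hdec⟩
    refine ⟨⟨_, N, isGKD_analyticCoreSubmodule hK hN hTN hNH
      (isCompl_iff_inter_eq_zero_and_exists_add.2 ⟨hKN, hdec⟩)⟩, fun x => ?_⟩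
    obtain ⟨k, hk, y, hy, rfl⟩ := hdec x
    exact ⟨k, hk, y, hNH hy, rfl⟩
  · rintro ⟨⟨M, N, h⟩, hdec⟩
    have : CompleteSpace N := h.closedN.completeSpace_coe
    rw [RightGDInvertible, h.analyticCore_eq hdec]
    exact ⟨h.closedM, N, h.closedN, h.invN, isQuasinilpotent_restrictCLM_iff.1 h.quasiN,
      isCompl_iff_inter_eq_zero_and_exists_add.1 h.compl⟩

end Paper
end

section
/- Let X be a complex Banach space and T a bounded linear operator on X. Then T is left generalized Drazin invertible if and only if there exists a bounded projection P on X (P² = P) such that TP = PT, T + P is bounded below, TP is quasinilpotent, and ran(P) = H₀(T). -/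
open Filter Topology Set

namespace Paper

variable {Y : Type*} [NormedAddCommGroup Y] [NormedSpace ℂ Y]

variable {X : Type*} [NormedAddCommGroup X] [NormedSpace ℂ X] [CompleteSpace X]

/-!
Membership `x ∈ H₀(T)` means `‖Tⁿ x‖ = O(εⁿ)` for every `ε > 0`. Hence
`H₀(T)` is a subspace, invariant under every operator commuting with `T`, on which `T + 1` is
injective, and, when `H₀(T)` is closed, also surjective (Neumann series).

Given `X = M ⊕ H₀(T)`, let `P` be the projection onto `H₀(T)` along `M`; it commutes with `T` since
both summands are invariant. Every orbit of `TP` lies in an orbit of `T` through `H₀(T)`, so `TP`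
is quasinilpotent by Banach–Steinhaus. `T + P` is injective because `T + 1` is injective on
`H₀(T)` and `ker T ⊆ H₀(T)`, and its range is the preimage of `T(M)` under `1 - P`, hence closed.
Conversely `M = ker P` works: `T(ker P) = (T + P)(ker P)` is closed since `T + P`, being bounded
below, is a closed embedding.
-/

open Asymptotics

lemma tendsto_norm_rpow_one_div_nhds_zero_iff {E : Type*} [SeminormedAddCommGroup E]
    (f : ℕ → E) :
    Tendsto (fun n : ℕ => ‖f n‖ ^ (1 / (n : ℝ))) atTop (𝓝 0) ↔
      ∀ ε > (0 : ℝ), f =O[atTop] (fun n => ε ^ n) := by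
  have key : ∀ ε > (0 : ℝ), ∀ n ≥ 1, ‖f n‖ ^ (1 / (n : ℝ)) < ε ↔ ‖f n‖ < ε ^ n := by
    intro ε hε n hn
    rw [one_div, Real.rpow_inv_lt_iff_of_pos (norm_nonneg _) hε.le (by exact_mod_cast hn),
      Real.rpow_natCast]
  constructor
  · intro h ε hε
    refine IsBigO.of_bound 1 ?_
    filter_upwards [h.eventually (gt_mem_nhds hε), eventually_ge_atTop 1] with n hlt hn
    rw [one_mul, Real.norm_of_nonneg (by positivity)]
    exact ((key ε hε n hn).1 hlt).le
  · intro h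
    refine tendsto_order.2 ⟨fun a ha => .of_forall fun n => ha.trans_le (by positivity),
      fun ε hε => ?_⟩
    have hlo : f =o[atTop] (fun n => ε ^ n) := (h (ε / 2) (half_pos hε)).trans_isLittleO
      (isLittleO_pow_pow_of_lt_left (half_pos hε).le (half_lt_self hε))
    filter_upwards [hlo.bound one_half_pos, eventually_ge_atTop 1] with n hle hn
    rw [Real.norm_of_nonneg (by positivity)] at hle
    rw [key ε hε n hn]
    linarith [pow_pos hε n]

lemma isQuasinilpotent_iff_isBigO (A : Y →L[ℂ] Y) :
    IsQuasinilpotent A ↔ ∀ ε > (0 : ℝ), (fun n => A ^ n) =O[atTop] (fun n => ε ^ n) :=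
  tendsto_norm_rpow_one_div_nhds_zero_iff _

lemma mem_quasinilpotentPart_iff (T : Y →L[ℂ] Y) {x : Y} :
    x ∈ quasinilpotentPart T ↔
      ∀ ε > (0 : ℝ), (fun n => (T ^ n) x) =O[atTop] (fun n => ε ^ n) :=
  tendsto_norm_rpow_one_div_nhds_zero_iff _

def quasinilpotentSubmodule (T : Y →L[ℂ] Y) : Submodule ℂ Y where
  carrier := quasinilpotentPart T
  zero_mem' := (mem_quasinilpotentPart_iff T).2 fun _ _ => by
    simpa only [map_zero] using isBigO_zero _ _
  add_mem' {x y} hx hy := (mem_quasinilpotentPart_iff T).2 fun ε hε => by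
    simpa only [map_add] using
      ((mem_quasinilpotentPart_iff T).1 hx ε hε).add ((mem_quasinilpotentPart_iff T).1 hy ε hε)
  smul_mem' c x hx := (mem_quasinilpotentPart_iff T).2 fun ε hε => by
    simp only [map_smul]
    exact ((mem_quasinilpotentPart_iff T).1 hx ε hε).const_smul_left c

@[simp] lemma coe_quasinilpotentSubmodule (T : Y →L[ℂ] Y) :
    (quasinilpotentSubmodule T : Set Y) = quasinilpotentPart T := rfl

lemma apply_mem_quasinilpotentPart_of_commute {T S : Y →L[ℂ] Y} (hST : Commute S T) {x : Y}
    (hx : x ∈ quasinilpotentPart T) : S x ∈ quasinilpotentPart T := by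
  rw [mem_quasinilpotentPart_iff] at hx ⊢
  intro ε hε
  have horbit : (fun n => (T ^ n) (S x)) = fun n => S ((T ^ n) x) := by
    funext n
    rw [← mul_apply_eq_comp, ← (hST.pow_right n).eq, mul_apply_eq_comp]
  rw [horbit]
  exact (S.isBigO_comp _ _).trans (hx ε hε)

lemma mem_quasinilpotentPart_of_apply_eq_zero {T : Y →L[ℂ] Y} {x : Y} (hx : T x = 0) :
    x ∈ quasinilpotentPart T := by
  rw [mem_quasinilpotentPart_iff]
  intro ε _
  refine (isBigO_zero _ _).congr' ?_ EventuallyEq.rfl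
  filter_upwards [eventually_ge_atTop 1] with n hn
  obtain ⟨k, rfl⟩ := Nat.exists_eq_add_of_le' hn
  rw [pow_succ, mul_apply_eq_comp, hx, map_zero]

lemma eq_zero_of_apply_eq_smul_of_mem_quasinilpotentPart {T : Y →L[ℂ] Y} {μ : ℂ} (hμ : μ ≠ 0)
    {x : Y} (hx : x ∈ quasinilpotentPart T) (hTx : T x = μ • x) : x = 0 := by
  have horbit : ∀ n, (T ^ n) x = μ ^ n • x := by
    intro n
    induction n with
    | zero => simp
    | succ n ih => rw [pow_succ', mul_apply_eq_comp, ih, map_smul, hTx, smul_smul, pow_succ]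
  have hμ' : 0 < ‖μ‖ := norm_pos_iff.2 hμ
  obtain ⟨C, hC⟩ := (isBigO_nat_atTop_iff fun n h => absurd h (by positivity)).1
    ((mem_quasinilpotentPart_iff T).1 hx (‖μ‖ / 2) (by positivity))
  have hbound : ∀ n : ℕ, ‖x‖ ≤ C * (1 / 2) ^ n := by
    intro n
    have h := hC n
    rw [horbit, norm_smul, norm_pow, Real.norm_of_nonneg (by positivity), div_pow,
      mul_comm] at h
    have h2n : (0 : ℝ) < ‖μ‖ ^ n := by positivity
    rw [div_pow, one_pow, ← mul_le_mul_iff_of_pos_right h2n]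
    calc ‖x‖ * ‖μ‖ ^ n ≤ C * (‖μ‖ ^ n / 2 ^ n) := h
      _ = C * (1 / 2 ^ n) * ‖μ‖ ^ n := by ring
  have hlim : Tendsto (fun n : ℕ => C * (1 / 2 : ℝ) ^ n) atTop (𝓝 0) := by
    simpa using (tendsto_pow_atTop_nhds_zero_of_lt_one (by norm_num : (0 : ℝ) ≤ 1 / 2)
      (by norm_num)).const_mul C
  exact norm_le_zero_iff.1 (ge_of_tendsto' hlim hbound)

lemma isQuasinilpotent_of_forall_mem_quasinilpotentPart [CompleteSpace Y] {T : Y →L[ℂ] Y}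
    (h : ∀ x, x ∈ quasinilpotentPart T) : IsQuasinilpotent T := by
  rw [isQuasinilpotent_iff_isBigO]
  intro ε hε
  have hε_pow : ∀ n : ℕ, ε ^ n ≠ 0 := fun n => pow_ne_zero n hε.ne'
  set c : ℂ := (ε : ℂ)⁻¹
  have hc : ∀ n : ℕ, ‖c ^ n‖ * ε ^ n = 1 := fun n => by
    rw [norm_pow, norm_inv, Complex.norm_real, Real.norm_of_nonneg hε.le, ← mul_pow,
      inv_mul_cancel₀ hε.ne', one_pow]
  -- Banach–Steinhaus for the rescaled powers `c ^ n • T ^ n = (ε⁻¹ • T) ^ n`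
  have horbit : ∀ x, ∃ C, ∀ n, ‖(c ^ n • T ^ n) x‖ ≤ C := by
    intro x
    obtain ⟨C, hC⟩ := (isBigO_nat_atTop_iff fun n h => absurd h (hε_pow n)).1
      ((mem_quasinilpotentPart_iff T).1 (h x) ε hε)
    refine ⟨C, fun n => ?_⟩
    calc ‖(c ^ n • T ^ n) x‖ = ‖c ^ n‖ * ‖(T ^ n) x‖ := norm_smul _ _
      _ ≤ ‖c ^ n‖ * (C * ‖ε ^ n‖) := by gcongr; exact hC n
      _ = C := by rw [Real.norm_of_nonneg (by positivity), mul_left_comm, hc, mul_one]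
  obtain ⟨C', hC'⟩ := banach_steinhaus horbit
  refine (isBigO_nat_atTop_iff fun n h => absurd h (hε_pow n)).2 ⟨C', fun n => ?_⟩
  calc ‖T ^ n‖ = ‖c ^ n • T ^ n‖ * ε ^ n := by rw [norm_smul, mul_right_comm, hc, one_mul]
    _ ≤ C' * ‖ε ^ n‖ := by
      rw [Real.norm_of_nonneg (by positivity)]; gcongr; exact hC' n

lemma one_sub_apply_tsum_pow_apply {R M : Type*} [Ring R] [TopologicalSpace M] [AddCommGroup M]
    [IsTopologicalAddGroup M] [T2Space M] [Module R M] (A : M →L[R] M) {y : M}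
    (h : Summable fun n => (A ^ n) y) : (1 - A) (∑' n, (A ^ n) y) = y := by
  rw [sub_apply, one_apply_eq_self, A.map_tsum h, h.tsum_eq_zero_add]
  simp only [← mul_apply_eq_comp, ← pow_succ', pow_zero, one_apply_eq_self]
  abel

lemma exists_mem_quasinilpotentPart_add_apply_eq [CompleteSpace Y] {T : Y →L[ℂ] Y}
    (hT : IsClosed (quasinilpotentPart T)) {y : Y} (hy : y ∈ quasinilpotentPart T) :
    ∃ x ∈ quasinilpotentPart T, x + T x = y := by
  have hnorm : ∀ n, ‖((-T) ^ n) y‖ = ‖(T ^ n) y‖ := fun n => by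
    rcases n.even_or_odd with hn | hn
    · rw [hn.neg_pow]
    · rw [hn.neg_pow, neg_apply, norm_neg]
  have hsum : Summable fun n => ((-T) ^ n) y := by
    refine summable_of_isBigO_nat summable_geometric_two ?_
    exact (isBigO_of_le _ fun n => (hnorm n).le).trans
      ((mem_quasinilpotentPart_iff T).1 hy (1 / 2) one_half_pos)
  refine ⟨∑' n, ((-T) ^ n) y, ?_, ?_⟩
  · rw [← coe_quasinilpotentSubmodule] at hT ⊢
    exact tsum_mem hT fun n =>
      apply_mem_quasinilpotentPart_of_commute ((Commute.refl T).neg_left.pow_left n) hy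
  · simpa [sub_neg_eq_add, add_comm] using one_sub_apply_tsum_pow_apply (-T) hsum

lemma isClosed_range_of_isIdempotentElem {R M : Type*} [Ring R] [TopologicalSpace M]
    [T1Space M] [AddCommGroup M] [IsTopologicalAddGroup M] [Module R M] {P : M →L[R] M}
    (hP : IsIdempotentElem P) : IsClosed (Set.range P) := by
  have h := ContinuousLinearMap.IsIdempotentElem.isClosed_range hP
  rwa [LinearMap.coe_range, ContinuousLinearMap.coe_coe] at h

lemma _root_.IsIdempotentElem.apply_eq_self_of_mem_range {R M : Type*} [Semiring R]
    [TopologicalSpace M] [AddCommMonoid M] [Module R M] {P : M →L[R] M}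
    (hP : IsIdempotentElem P) {x : M} (hx : x ∈ Set.range P) : P x = x := by
  obtain ⟨y, rfl⟩ := hx
  rw [← mul_apply_eq_comp, hP.eq]

section Projection

variable {T P : Y →L[ℂ] Y}

lemma isQuasinilpotent_mul_of_range_subset [CompleteSpace Y] (hP : IsIdempotentElem P)
    (hTP : Commute T P) (hran : Set.range P ⊆ quasinilpotentPart T) :
    IsQuasinilpotent (T * P) := by
  refine isQuasinilpotent_of_forall_mem_quasinilpotentPart fun x => ?_
  rw [mem_quasinilpotentPart_iff]
  intro ε hε
  refine ((mem_quasinilpotentPart_iff T).1 (hran (mem_range_self x)) ε hε).congr' ?_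
    EventuallyEq.rfl
  filter_upwards [eventually_ge_atTop 1] with n hn
  obtain ⟨k, rfl⟩ := Nat.exists_eq_add_of_le' hn
  rw [hTP.mul_pow, hP.pow_succ_eq, mul_apply_eq_comp]

lemma injective_add_of_range_eq (hP : IsIdempotentElem P) (hTP : Commute T P)
    (hran : Set.range P = quasinilpotentPart T) : Function.Injective (T + P) := by
  rw [injective_iff_map_eq_zero]
  intro x hx
  have hPx : P x = 0 := by
    refine eq_zero_of_apply_eq_smul_of_mem_quasinilpotentPart (μ := -1) (by norm_num)
      (hran ▸ mem_range_self x) ?_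
    have h := congrArg P hx
    rw [add_apply, map_add, ← mul_apply_eq_comp P T, ← hTP.eq, mul_apply_eq_comp,
      hP.apply_eq_self_of_mem_range (mem_range_self x), map_zero] at h
    rw [neg_one_smul, eq_neg_iff_add_eq_zero, h]
  have hTx : T x = 0 := by simpa [hPx] using hx
  have hx' : x ∈ Set.range P := hran ▸ mem_quasinilpotentPart_of_apply_eq_zero hTx
  rw [← hP.apply_eq_self_of_mem_range hx', hPx]

lemma isClosed_range_add_of_isClosed_image_ker [CompleteSpace Y] (hP : IsIdempotentElem P)
    (hTP : Commute T P) (hran : Set.range P = quasinilpotentPart T)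
    (hker : IsClosed (T '' (P.ker : Set Y))) : IsClosed (Set.range (T + P)) := by
  have hH : IsClosed (quasinilpotentPart T) := hran ▸ isClosed_range_of_isIdempotentElem hP
  have hcomp : (1 - P) * (T + P) = T * (1 - P) := by
    rw [sub_mul, one_mul, mul_add, hP.eq, ← hTP.eq, mul_sub, mul_one]
    abel
  suffices Set.range (T + P) = ⇑(1 - P) ⁻¹' (T '' (P.ker : Set Y)) from
    this ▸ hker.preimage (1 - P).continuous
  ext x
  constructor
  · rintro ⟨z, rfl⟩
    refine ⟨(1 - P) z, ?_, ?_⟩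
    · change P ((1 - P) z) = 0
      rw [← mul_apply_eq_comp, mul_sub, mul_one, hP.eq, sub_self, zero_apply]
    · rw [← mul_apply_eq_comp, ← hcomp, mul_apply_eq_comp]
  · rintro ⟨m, hm, hTm⟩
    obtain ⟨h, hh, hhx⟩ := exists_mem_quasinilpotentPart_add_apply_eq hH (hran ▸ mem_range_self x)
    have hPm : P m = 0 := hm
    have hPh : P h = h := hP.apply_eq_self_of_mem_range (hran ▸ hh)
    refine ⟨m + h, ?_⟩
    rw [add_apply, map_add, map_add, hPm, hPh, hTm, sub_apply, one_apply_eq_self, ← hhx]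
    abel

end Projection

lemma BoundedBelow.isClosedMap [CompleteSpace Y] {A : Y →L[ℂ] Y} (hA : BoundedBelow A) :
    IsClosedMap A := by
  obtain ⟨K, hK⟩ := A.antilipschitz_of_injective_of_isClosed_range hA.1 hA.2
  exact (hK.isClosedEmbedding A.uniformContinuous).isClosedMap

lemma exists_projection_of_leftGDInvertible {T : X →L[ℂ] X} (hT : LeftGDInvertible T) :
    ∃ P : X →L[ℂ] X, IsIdempotentElem P ∧ Commute T P ∧ BoundedBelow (T + P) ∧
      IsQuasinilpotent (T * P) ∧ Set.range P = quasinilpotentPart T := by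
  obtain ⟨hH, M, hMc, hMT, hTM, hMH, hspan⟩ := hT
  set N := quasinilpotentSubmodule T
  have hNM : IsCompl N M := by
    refine ⟨Submodule.disjoint_def.2 fun x hxN hxM => (Set.ext_iff.1 hMH x).1 ⟨hxM, hxN⟩, ?_⟩
    rw [codisjoint_iff, Submodule.eq_top_iff']
    intro x
    obtain ⟨m, hm, h, hh, rfl⟩ := hspan x
    exact add_comm h m ▸ Submodule.add_mem_sup hh hm
  have htop := Submodule.IsCompl.isTopCompl_of_isClosed hNM hH hMc
  set P := N.projectionL M htop
  have hP : IsIdempotentElem P := Submodule.isIdempotentElem_projectionL htop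
  have hran : Set.range P = quasinilpotentPart T := by
    rw [← ContinuousLinearMap.coe_coe, ← LinearMap.coe_range]
    exact congrArg SetLike.coe (Submodule.range_projectionL htop)
  have hker : P.ker = M := Submodule.ker_projectionL htop
  have hTP : Commute T P := by
    refine ((ContinuousLinearMap.IsIdempotentElem.commute_iff hP).2 ⟨?_, ?_⟩).symm
    · rw [Submodule.range_projectionL, Module.End.mem_invtSubmodule]
      exact fun x hx => apply_mem_quasinilpotentPart_of_commute (Commute.refl T) hx
    · rw [hker, Module.End.mem_invtSubmodule]
      exact hMT
  refine ⟨P, hP, hTP, ⟨injective_add_of_range_eq hP hTP hran, ?_⟩,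
    isQuasinilpotent_mul_of_range_subset hP hTP hran.subset, hran⟩
  exact isClosed_range_add_of_isClosed_image_ker hP hTP hran (hker ▸ hTM)

lemma leftGDInvertible_of_projection {T P : X →L[ℂ] X} (hP : IsIdempotentElem P)
    (hTP : Commute T P) (hbb : BoundedBelow (T + P)) (hran : Set.range P = quasinilpotentPart T) :
    LeftGDInvertible T := by
  refine ⟨hran ▸ isClosed_range_of_isIdempotentElem hP, P.ker, P.isClosed_ker, ?_, ?_, ?_, ?_⟩
  · have h := ((ContinuousLinearMap.IsIdempotentElem.commute_iff hP).1 hTP.symm).2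
    exact (Module.End.mem_invtSubmodule _).1 h
  · have himage : T '' (P.ker : Set X) = (T + P) '' (P.ker : Set X) :=
      image_congr fun m (hm : P m = 0) => by rw [add_apply, hm, add_zero]
    rw [himage]
    exact hbb.isClosedMap _ P.isClosed_ker
  · ext x
    constructor
    · rintro ⟨hx0, hxH⟩
      have hxP : x ∈ Set.range P := hran ▸ hxH
      rw [← hP.apply_eq_self_of_mem_range hxP]
      exact hx0
    · rintro rfl
      exact ⟨zero_mem _, hran ▸ ⟨0, map_zero P⟩⟩
  · intro x
    refine ⟨x - P x, ?_, P x, hran ▸ mem_range_self x, (sub_add_cancel x (P x)).symm⟩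
    change P (x - P x) = 0
    rw [map_sub, hP.apply_eq_self_of_mem_range (mem_range_self x), sub_self]

/-- `T` is left generalized Drazin invertible iff there is a bounded
projection `P` commuting with `T` with `T + P` bounded below, `TP` quasinilpotent
and `ran P = H₀(T)`. -/
theorem left_gd_iff_projection (T : X →L[ℂ] X) :
    LeftGDInvertible T ↔
      ∃ P : X →L[ℂ] X, P * P = P ∧ T * P = P * T ∧ BoundedBelow (T + P) ∧
        IsQuasinilpotent (T * P) ∧ Set.range P = quasinilpotentPart T := by
  constructor
  · exact exists_projection_of_leftGDInvertible
  · rintro ⟨P, hP, hTP, hbb, -, hran⟩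
    exact leftGDInvertible_of_projection hP hTP hbb hran

end Paper
end

section
/- Let X be a complex Banach space, T a bounded linear operator on X, and S a generalized Drazin inverse of T (i.e., ST = TS, STS = S, and TST − T is quasinilpotent). Then T has Dunford's property (C) if and only if S has Dunford's property (C). -/
open Filter Topology Set

namespace Paper

variable {Y : Type*} [NormedAddCommGroup Y] [NormedSpace ℂ Y]

variable {X : Type*} [NormedAddCommGroup X] [NormedSpace ℂ X] [CompleteSpace X]

/-!
`P = TS` is an idempotent commuting with `T` and `S`, and `X = ran P ⊕ ker P`. On `ran P` the
operator `S` inverts `T`, so `λ ↦ λ⁻¹` exchanges the nonzero local spectra of `T` and `S`; on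
`ker P` the operator `S` vanishes and `T` is quasinilpotent, so both local spectra lie in `{0}`.
Hence `λ ∈ σ_T(x) ↔ λ⁻¹ ∈ σ_S(x)` for `λ ≠ 0`, while `0 ∉ σ_T(x)` and `0 ∉ σ_S(x)` both mean
`Px = x` (for `T` by Liouville's theorem). So `X_S(Ω) = X_T({0} ∪ Ω⁻¹)`, intersected with the
closed subspace `ran P` when `0 ∉ Ω`, and symmetrically with `S` and `T` exchanged.
-/

open scoped Pointwise

theorem IsQuasinilpotent.neg {N : Y →L[ℂ] Y} (hN : IsQuasinilpotent N) :
    IsQuasinilpotent (-N) := by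
  unfold IsQuasinilpotent at hN ⊢
  convert hN using 3 with n
  rcases neg_one_pow_eq_or (Y →L[ℂ] Y) n with h | h <;> simp [neg_pow, h]

section Quasinilpotent

variable {N : X →L[ℂ] X}

theorem IsQuasinilpotent.spectralRadius_eq_zero (hN : IsQuasinilpotent N) :
    spectralRadius ℂ N = 0 := by
  refine tendsto_nhds_unique (spectrum.pow_norm_pow_one_div_tendsto_nhds_spectralRadius N) ?_
  simpa [Function.comp_def] using (ENNReal.continuous_ofReal.tendsto 0).comp hN

theorem IsQuasinilpotent.isUnit_one_sub_smul (hN : IsQuasinilpotent N) (z : ℂ) :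
    IsUnit (1 - z • N) :=
  spectrum.isUnit_one_sub_smul_of_lt_inv_radius (by simp [hN.spectralRadius_eq_zero])

theorem IsQuasinilpotent.isUnit_smul_one_sub (hN : IsQuasinilpotent N) {μ : ℂ} (hμ : μ ≠ 0) :
    IsUnit (μ • 1 - N) := by
  have := spectrum.mem_resolventSet_of_spectralRadius_lt (𝕜 := ℂ) (a := N) (k := μ)
    (by simpa [hN.spectralRadius_eq_zero, pos_iff_ne_zero] using hμ)
  rwa [spectrum.mem_resolventSet_iff, Algebra.algebraMap_eq_smul_one] at this

end Quasinilpotent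

theorem analyticAt_ringInverse_apply {f : ℂ → X →L[ℂ] X} {z : ℂ} (hf : AnalyticAt ℂ f z)
    (hz : IsUnit (f z)) (v : X) : AnalyticAt ℂ (fun μ => Ring.inverse (f μ) v) z := by
  have hinv := analyticAt_inverse (𝕜 := ℂ) hz.unit
  rw [hz.unit_spec] at hinv
  exact ((ContinuousLinearMap.apply ℂ X v).analyticAt _).comp (hinv.comp hf)

theorem mem_localResolvent_iff {T : Y →L[ℂ] Y} {x : Y} {l : ℂ} :
    l ∈ localResolvent T x ↔
      ∃ f : ℂ → Y, ∀ᶠ μ in 𝓝 l, AnalyticAt ℂ f μ ∧ μ • f μ - T (f μ) = x := by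
  constructor
  · rintro ⟨U, ⟨hU, f, hf, hfx⟩, hl⟩
    exact ⟨f, Filter.mem_of_superset (hU.mem_nhds hl) fun μ hμ => ⟨hf μ hμ, hfx μ hμ⟩⟩
  · rintro ⟨f, hf⟩
    exact ⟨interior {μ | AnalyticAt ℂ f μ ∧ μ • f μ - T (f μ) = x},
      ⟨isOpen_interior, f, fun μ hμ => (interior_subset hμ).1, fun μ hμ => (interior_subset hμ).2⟩,
      mem_interior_iff_mem_nhds.mpr hf⟩

theorem add_mem_localResolvent {T : Y →L[ℂ] Y} {x y : Y} {l : ℂ} (hx : l ∈ localResolvent T x)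
    (hy : l ∈ localResolvent T y) : l ∈ localResolvent T (x + y) := by
  obtain ⟨f, hf⟩ := mem_localResolvent_iff.mp hx
  obtain ⟨g, hg⟩ := mem_localResolvent_iff.mp hy
  refine mem_localResolvent_iff.mpr ⟨f + g, ?_⟩
  filter_upwards [hf, hg] with μ ⟨hfa, hfx⟩ ⟨hga, hgy⟩
  refine ⟨hfa.add hga, ?_⟩
  simp only [Pi.add_apply, smul_add, map_add, ← hfx, ← hgy]
  abel

theorem mem_localResolvent_of_apply_eq_zero {A : Y →L[ℂ] Y} {x : Y} (hx : A x = 0) {l : ℂ}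
    (hl : l ≠ 0) : l ∈ localResolvent A x := by
  refine mem_localResolvent_iff.mpr ⟨fun μ => μ⁻¹ • x, ?_⟩
  filter_upwards [eventually_ne_nhds hl] with μ hμ
  refine ⟨(analyticAt_inv hμ).smul analyticAt_const, ?_⟩
  simp [smul_smul, hμ, hx]

/- In the next two lemmas `A * (P * A') = P` says that `P * A'` is a right inverse of `A` on the
range of `P`. -/

theorem inv_mem_localResolvent_apply {A A' P : Y →L[ℂ] Y} (h : A * (P * A') = P) {x : Y}
    {l : ℂ} (hl : l ≠ 0) (hx : l ∈ localResolvent A' x) : l⁻¹ ∈ localResolvent A (P x) := by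
  obtain ⟨f, hf⟩ := mem_localResolvent_iff.mp hx
  have hinv : Tendsto Inv.inv (𝓝 l⁻¹) (𝓝 l) := by
    simpa using (continuousAt_inv₀ (inv_ne_zero hl)).tendsto
  refine mem_localResolvent_iff.mpr ⟨fun μ => -(μ⁻¹ • P (A' (f μ⁻¹))), ?_⟩
  filter_upwards [hinv.eventually hf, eventually_ne_nhds (inv_ne_zero hl)]
    with μ ⟨hfa, hfx⟩ hμ
  refine ⟨((analyticAt_inv hμ).smul ((P.comp A').analyticAt _ |>.comp
    (hfa.comp (analyticAt_inv hμ)))).neg, ?_⟩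
  have hA : A (P (A' (f μ⁻¹))) = P (f μ⁻¹) := by
    simpa using DFunLike.congr_fun h (f μ⁻¹)
  simp only [smul_neg, smul_smul, mul_inv_cancel₀ hμ, one_smul, map_neg, map_smul, hA, ← hfx,
    map_sub]
  abel

theorem zero_mem_localResolvent_apply {A A' P : X →L[ℂ] X}
    (h : A * (P * A') = P) (hP : IsIdempotentElem P) (x : X) :
    0 ∈ localResolvent A (P x) := by
  set C := P * A'
  have hunit : ∀ᶠ μ in 𝓝 (0 : ℂ), IsUnit (1 - μ • C) := by
    have hcont : Continuous fun μ : ℂ => 1 - μ • C := by fun_prop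
    exact hcont.continuousAt.eventually_mem (Units.isOpen.mem_nhds (by simp))
  refine mem_localResolvent_iff.mpr ⟨fun μ => -C (Ring.inverse (1 - μ • C) (P x)), ?_⟩
  filter_upwards [hunit] with μ hμ
  refine ⟨((C.analyticAt _).comp
    (analyticAt_ringInverse_apply (by fun_prop) hμ (P x))).neg, ?_⟩
  have hop : A * C - μ • C = P * (1 - μ • C) := by
    rw [h, mul_sub, mul_one, mul_smul_comm, ← mul_assoc, hP.eq]
  calc μ • -C (Ring.inverse (1 - μ • C) (P x)) - A (-C (Ring.inverse (1 - μ • C) (P x)))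
      = (A * C - μ • C) (Ring.inverse (1 - μ • C) (P x)) := by
        simp only [smul_neg, map_neg, sub_apply, mul_apply_eq_comp, smul_apply]
        abel
    _ = P (((1 - μ • C) * Ring.inverse (1 - μ • C)) (P x)) := by rw [hop]; rfl
    _ = P x := by rw [Ring.mul_inverse_cancel _ hμ, one_apply_eq_self, ← mul_apply_eq_comp, hP.eq]

section Complement

variable {T P : Y →L[ℂ] Y}

theorem smul_one_sub_mul_one_sub (hP : IsIdempotentElem P) (hTP : Commute T P) (μ : ℂ) :
    (μ • 1 - T) * (1 - P) = (1 - P) * (μ • 1 - (T - T * P)) := by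
  ext v
  have hPP (w : Y) : P (P w) = P w := DFunLike.congr_fun hP.eq w
  have hPT (w : Y) : P (T w) = T (P w) := (DFunLike.congr_fun hTP.eq w).symm
  simp only [mul_apply_eq_comp, sub_apply, smul_apply, one_apply_eq_self, map_sub, map_smul,
    hPP, hPT]
  module

theorem smul_one_sub_sub_mul_one_sub (hP : IsIdempotentElem P) (hTP : Commute T P) (μ : ℂ) :
    (μ • 1 - (T - T * P)) * (1 - P) = (1 - P) * (μ • 1 - T) := by
  ext v
  have hPP (w : Y) : P (P w) = P w := DFunLike.congr_fun hP.eq w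
  have hPT (w : Y) : P (T w) = T (P w) := (DFunLike.congr_fun hTP.eq w).symm
  simp only [mul_apply_eq_comp, sub_apply, smul_apply, one_apply_eq_self, map_sub, map_smul,
    hPP, hPT]
  module

end Complement

theorem IsQuasinilpotent.eq_zero_of_eventually_smul_one_sub_apply_eq {N : X →L[ℂ] X}
    (hN : IsQuasinilpotent N) {v : ℂ → X} {n : X} (hv : ContinuousAt v 0)
    (h : ∀ᶠ μ : ℂ in 𝓝 0, (μ • 1 - N) (v μ) = n) : n = 0 := by
  -- `w` is entire, equals `v ∘ inv` near `∞` and vanishes at `0`; Liouville forces `v 0 = 0`.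
  set w : ℂ → X := fun z => z • Ring.inverse (1 - z • N) n
  have hw : Differentiable ℂ w := fun z =>
    (analyticAt_id.smul (analyticAt_ringInverse_apply (by fun_prop)
      (hN.isUnit_one_sub_smul z) n)).differentiableAt
  have hwv : ∀ᶠ z in Bornology.cobounded ℂ, w z = v z⁻¹ := by
    filter_upwards [tendsto_inv₀_cobounded.eventually h,
      Bornology.eventually_ne_cobounded 0] with z hz hz0
    have hop : z • (z⁻¹ • 1 - N) = 1 - z • N := by
      rw [smul_sub, smul_smul, mul_inv_cancel₀ hz0, one_smul]
    have hsmul : (1 - z • N) (v z⁻¹) = z • n := by rw [← hop, smul_apply, hz]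
    calc w z = (Ring.inverse (1 - z • N) * (1 - z • N)) (v z⁻¹) := by
          rw [mul_apply_eq_comp, hsmul, map_smul]
      _ = v z⁻¹ := by rw [Ring.inverse_mul_cancel _ (hN.isUnit_one_sub_smul z), one_apply_eq_self]
  have hlim : Tendsto w (cocompact ℂ) (𝓝 (v 0)) := by
    rw [← Metric.cobounded_eq_cocompact]
    simpa using (hv.tendsto.comp tendsto_inv₀_cobounded).congr' (hwv.mono fun z hz => hz.symm)
  have hv0 : v 0 = 0 := by simpa [w] using (hw.apply_eq_of_tendsto_cocompact 0 hlim).symm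
  simpa [hv0] using h.self_of_nhds.symm

section QuasinilpotentPart

variable {T P : X →L[ℂ] X} (hP : IsIdempotentElem P) (hTP : Commute T P)
  (hN : IsQuasinilpotent (T - T * P))
include hP hTP hN

theorem mem_localResolvent_sub_apply {l : ℂ} (hl : l ≠ 0) (x : X) :
    l ∈ localResolvent T (x - P x) := by
  refine mem_localResolvent_iff.mpr ⟨fun μ => (1 - P) (Ring.inverse (μ • 1 - (T - T * P)) x), ?_⟩
  filter_upwards [eventually_ne_nhds hl] with μ hμ
  have hunit := hN.isUnit_smul_one_sub hμ
  refine ⟨((1 - P).analyticAt _).comp (analyticAt_ringInverse_apply (by fun_prop) hunit x), ?_⟩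
  calc μ • (1 - P) (Ring.inverse (μ • 1 - (T - T * P)) x)
        - T ((1 - P) (Ring.inverse (μ • 1 - (T - T * P)) x))
      = ((μ • 1 - T) * (1 - P)) (Ring.inverse (μ • 1 - (T - T * P)) x) := by
        simp only [mul_apply_eq_comp, sub_apply, smul_apply, one_apply_eq_self]
    _ = (1 - P) (((μ • 1 - (T - T * P)) * Ring.inverse (μ • 1 - (T - T * P))) x) := by
        rw [smul_one_sub_mul_one_sub hP hTP]; rfl
    _ = x - P x := by rw [Ring.mul_inverse_cancel _ hunit]; rfl

theorem apply_eq_of_zero_mem_localResolvent {x : X} (hx : 0 ∈ localResolvent T x) : P x = x := by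
  obtain ⟨f, hf⟩ := mem_localResolvent_iff.mp hx
  have hv : ContinuousAt (fun μ => (1 - P) (f μ)) 0 :=
    (1 - P).continuous.continuousAt.comp hf.self_of_nhds.1.continuousAt
  refine (sub_eq_zero.mp (hN.eq_zero_of_eventually_smul_one_sub_apply_eq hv ?_)).symm
  filter_upwards [hf] with μ ⟨_, hfx⟩
  calc (μ • 1 - (T - T * P)) ((1 - P) (f μ)) = ((1 - P) * (μ • 1 - T)) (f μ) := by
        rw [← smul_one_sub_sub_mul_one_sub hP hTP]; rfl
    _ = x - P x := by
        rw [mul_apply_eq_comp, sub_apply (μ • 1), smul_apply, one_apply_eq_self, hfx]; rfl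

end QuasinilpotentPart

theorem isClosed_insert_zero_inv {Ω : Set ℂ} (hΩ : IsClosed Ω) : IsClosed (insert 0 Ω⁻¹) := by
  have hcompl : (insert 0 Ω⁻¹)ᶜ = {0}ᶜ ∩ Inv.inv ⁻¹' Ωᶜ := by ext; simp
  rw [← isOpen_compl_iff, hcompl]
  exact continuousOn_inv₀.isOpen_inter_preimage isOpen_compl_singleton hΩ.isOpen_compl

section InvSubset

variable {Z : Type*} [TopologicalSpace Z] {A B : Z → Set ℂ} {F : Set Z}

theorem isClosed_setOf_subset_of_inv (hF : IsClosed F)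
    (hAB : ∀ z, ∀ l ≠ 0, l ∈ A z ↔ l⁻¹ ∈ B z) (hA : ∀ z, 0 ∈ A z ↔ z ∉ F)
    (hB : ∀ Ω, IsClosed Ω → IsClosed {z | B z ⊆ Ω}) {Ω : Set ℂ} (hΩ : IsClosed Ω) :
    IsClosed {z | A z ⊆ Ω} := by
  have hset : {z | A z ⊆ Ω} = {z | B z ⊆ insert 0 Ω⁻¹} ∩ {z | 0 ∈ Ω ∨ z ∈ F} := by
    ext z
    constructor
    · intro hz
      refine ⟨fun l hl => ?_, ?_⟩
      · rcases eq_or_ne l 0 with rfl | hl0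
        · exact mem_insert _ _
        · refine mem_insert_of_mem _ (hz ?_)
          rwa [hAB z _ (inv_ne_zero hl0), inv_inv]
      · by_cases hzF : z ∈ F
        · exact Or.inr hzF
        · exact Or.inl (hz ((hA z).mpr hzF))
    · rintro ⟨hz, h0⟩ l hl
      rcases eq_or_ne l 0 with rfl | hl0
      · exact h0.resolve_right ((hA z).mp hl)
      · rcases hz ((hAB z l hl0).mp hl) with h | h
        · exact absurd h (inv_ne_zero hl0)
        · simpa using h
  rw [hset]
  refine (hB _ (isClosed_insert_zero_inv hΩ)).inter ?_
  by_cases h0 : (0 : ℂ) ∈ Ω <;> simp [h0, hF]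

theorem forall_isClosed_setOf_subset_iff_of_inv (hF : IsClosed F)
    (hAB : ∀ z, ∀ l ≠ 0, l ∈ A z ↔ l⁻¹ ∈ B z) (hA : ∀ z, 0 ∈ A z ↔ z ∉ F)
    (hB : ∀ z, 0 ∈ B z ↔ z ∉ F) :
    (∀ Ω, IsClosed Ω → IsClosed {z | A z ⊆ Ω}) ↔ (∀ Ω, IsClosed Ω → IsClosed {z | B z ⊆ Ω}) := by
  have hBA : ∀ z, ∀ l ≠ 0, l ∈ B z ↔ l⁻¹ ∈ A z := fun z l hl => by
    rw [hAB z _ (inv_ne_zero hl), inv_inv]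
  exact ⟨fun hA' _ hΩ => isClosed_setOf_subset_of_inv hF hBA hB hA' hΩ,
    fun hB' _ hΩ => isClosed_setOf_subset_of_inv hF hAB hA hB' hΩ⟩

end InvSubset

namespace GDInverse

section Algebra

variable {T S : Y →L[ℂ] Y} (hc : S * T = T * S) (hs : S * T * S = S)

include hs in
theorem isIdempotentElem_mul : IsIdempotentElem (T * S) := by
  rw [IsIdempotentElem, mul_assoc, ← mul_assoc S, hs]

include hc in
theorem commute_mul : Commute T (T * S) := by
  rw [Commute, SemiconjBy, mul_assoc, ← hc]

include hc in
theorem isQuasinilpotent_sub_mul_mul (hq : IsQuasinilpotent (T * S * T - T)) :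
    IsQuasinilpotent (T - T * (T * S)) := by
  rw [(commute_mul hc).eq, ← neg_sub]
  exact hq.neg

include hc hs

theorem mul_mul_self : T * S * S = S := by
  rw [← hc, hs]

theorem mul_mul_mul_eq_mul : S * (T * S * T) = T * S := by
  rw [← mul_assoc, ← mul_assoc, ← hc, hs, hc]

end Algebra

variable {T S : X →L[ℂ] X} (hc : S * T = T * S) (hs : S * T * S = S)
include hc hs

theorem inv_mem_localResolvent_iff (hq : IsQuasinilpotent (T * S * T - T)) {x : X} {l : ℂ}
    (hl : l ≠ 0) : l⁻¹ ∈ localResolvent S x ↔ l ∈ localResolvent T x := by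
  constructor
  · intro h
    have hran := inv_mem_localResolvent_apply (by rw [mul_mul_self hc hs]) (inv_ne_zero hl) h
    rw [inv_inv] at hran
    have hker := mem_localResolvent_sub_apply (isIdempotentElem_mul hs) (commute_mul hc)
      (isQuasinilpotent_sub_mul_mul hc hq) hl x
    simpa using add_mem_localResolvent hran hker
  · intro h
    have hran := inv_mem_localResolvent_apply (mul_mul_mul_eq_mul hc hs) hl h
    have hker : S (x - (T * S) x) = 0 := by
      simpa [sub_eq_zero] using (DFunLike.congr_fun hs x).symm
    simpa using
      add_mem_localResolvent hran (mem_localResolvent_of_apply_eq_zero hker (inv_ne_zero hl))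

theorem zero_mem_localResolvent_iff (hq : IsQuasinilpotent (T * S * T - T)) {x : X} :
    0 ∈ localResolvent T x ↔ T (S x) = x := by
  refine ⟨apply_eq_of_zero_mem_localResolvent (isIdempotentElem_mul hs) (commute_mul hc)
    (isQuasinilpotent_sub_mul_mul hc hq), fun h => ?_⟩
  rw [← h]
  exact zero_mem_localResolvent_apply (by rw [mul_mul_self hc hs]) (isIdempotentElem_mul hs) x

theorem zero_mem_localResolvent_inverse_iff {x : X} : 0 ∈ localResolvent S x ↔ T (S x) = x := by
  refine ⟨fun h => ?_, fun h => ?_⟩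
  · obtain ⟨f, hf⟩ := mem_localResolvent_iff.mp h
    have hx : -S (f 0) = x := by simpa using hf.self_of_nhds.2
    have hTSS : T (S (S (f 0))) = S (f 0) := by
      simpa [← mul_assoc] using DFunLike.congr_fun (mul_mul_self hc hs) (f 0)
    rw [← hx, map_neg, map_neg, hTSS]
  · rw [← h]
    exact zero_mem_localResolvent_apply (mul_mul_mul_eq_mul hc hs) (isIdempotentElem_mul hs) x

end GDInverse

/-- `T` has Dunford's property `(C)` iff its generalized Drazin inverse
`S` has property `(C)`. -/
theorem propertyC_iff_propertyC_gdInverse (T S : X →L[ℂ] X) (h : IsGDInverse T S) :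
    HasPropertyC T ↔ HasPropertyC S := by
  obtain ⟨hc, hs, hq⟩ := h
  exact forall_isClosed_setOf_subset_iff_of_inv (isClosed_eq (by fun_prop) continuous_id)
    (fun _ _ hl => not_congr (GDInverse.inv_mem_localResolvent_iff hc hs hq hl).symm)
    (fun _ => not_congr (GDInverse.zero_mem_localResolvent_iff hc hs hq))
    (fun _ => not_congr (GDInverse.zero_mem_localResolvent_inverse_iff hc hs))

end Paper
end
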